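/- Let k be an integer with 0 ≤ k ≤ m-1, and define a = (γ^(2m+3k+2) + γ^(m+6k+4) + 1)/(3γ^(m+3k+2)), b = (γ^(2m) + γ^(m+6k+4) + γ^(3k+2))/(3γ^(m+3k+2)), c = (γ^(6k+4) + γ^(3k+2) + 1)/(3γ^(3k+2)) in F_q, and let g(x) = a·x^(2m+1) + b·x^(m+1) + c·x. Then for every integer i with 0 ≤ i ≤ m-1 one has g(γ^(3(i+k)+2)) = γ^(3i). -/

import Mathlib

/-!
Put ω = γ^m, a primitive cube root of unity. Every x = γ^(3j+2) satisfies x^m = ω², so on this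
coset of the cubes g(x) = (aω⁴ + bω² + c)·x is multiplication by a constant. Writing
γ^(3(i+k)+2) = t·γ^(3i) with t = γ^(3k+2), it remains to check that this constant is t⁻¹, a
rational identity in ω and t that holds modulo ω² + ω + 1 = 0.
-/

section

variable {F : Type*} [Field F]

theorem IsPrimitiveRoot.sq_add_self_add_one {ω : F} (hω : IsPrimitiveRoot ω 3) :
    ω ^ 2 + ω + 1 = 0 := by
  have h := hω.geom_sum_eq_zero (by norm_num)
  simp only [Finset.sum_range_succ, Finset.sum_range_zero] at h
  linear_combination h

theorem IsPrimitiveRoot.three_ne_zero {ω : F} (hω : IsPrimitiveRoot ω 3) : (3 : F) ≠ 0 := by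
  simpa using (hω.neZero' (n := 3)).out

theorem IsPrimitiveRoot.pow_three_mul_add_two_pow {γ : F} {m : ℕ}
    (hγ : IsPrimitiveRoot γ (3 * m)) (n : ℕ) : (γ ^ (3 * n + 2)) ^ m = (γ ^ m) ^ 2 := by
  rw [← pow_mul, ← pow_mul, show (3 * n + 2) * m = 3 * m * n + m * 2 by ring, pow_add, pow_mul,
    hγ.pow_eq_one, one_pow, one_mul]

theorem trinomial_eq_mul_of_pow_eq (a b c : F) {x ζ : F} {m : ℕ} (hx : x ^ m = ζ) :
    a * x ^ (2 * m + 1) + b * x ^ (m + 1) + c * x = (a * ζ ^ 2 + b * ζ + c) * x := by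
  rw [pow_succ, pow_succ, pow_mul', hx]
  ring

theorem IsPrimitiveRoot.cube_root_coeff_eq_inv {ω t : F} (hω : IsPrimitiveRoot ω 3) (ht : t ≠ 0) :
    (ω ^ 2 * t + ω * t ^ 2 + 1) / (3 * (ω * t)) * (ω ^ 2) ^ 2
      + (ω ^ 2 + ω * t ^ 2 + t) / (3 * (ω * t)) * ω ^ 2 + (t ^ 2 + t + 1) / (3 * t) = t⁻¹ := by
  have := hω.three_ne_zero
  have := hω.ne_zero (by norm_num)
  field_simp
  linear_combination (ω ^ 2 * t + ω * t ^ 2 + 2) * hω.pow_eq_one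
    + (t + t ^ 2) * hω.sq_add_self_add_one

end

theorem stmt7_general (q m : ℕ) (F : Type*) [Field F] [Fintype F]
    (hq : Fintype.card F = q) (hq3 : q % 3 = 1)
    (hm : m = (q - 1) / 3)
    (γ : Fˣ) (hγ : ∀ x : Fˣ, x ∈ Subgroup.zpowers γ)
    (k : ℕ)
    (a b c : F)
    (ha : a = ((γ : F)^(2*m+3*k+2) + (γ : F)^(m+6*k+4) + 1) / (3 * (γ : F)^(m+3*k+2)))
    (hb : b = ((γ : F)^(2*m) + (γ : F)^(m+6*k+4) + (γ : F)^(3*k+2)) / (3 * (γ : F)^(m+3*k+2)))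
    (hc : c = ((γ : F)^(6*k+4) + (γ : F)^(3*k+2) + 1) / (3 * (γ : F)^(3*k+2)))
    (g : F → F)
    (hg : ∀ x : F, g x = a * x^(2*m+1) + b * x^(m+1) + c * x) :
    ∀ i : ℕ, i ≤ m - 1 → g ((γ : F)^(3*(i+k)+2)) = (γ : F)^(3*i) := by
  intro i _
  have hq1 : 1 < q := hq ▸ Fintype.one_lt_card
  have hγ_prim : IsPrimitiveRoot (γ : F) (3 * m) := by
    rw [IsPrimitiveRoot.coe_units_iff, show 3 * m = Nat.card Fˣ by
      rw [Nat.card_units, Nat.card_eq_fintype_card, hq]; omega,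
      ← orderOf_eq_card_of_forall_mem_zpowers hγ]
    exact IsPrimitiveRoot.orderOf γ
  have hω : IsPrimitiveRoot ((γ : F) ^ m) 3 := hγ_prim.pow (by omega) (mul_comm 3 m)
  have ht : (γ : F) ^ (3 * k + 2) ≠ 0 := pow_ne_zero _ γ.ne_zero
  rw [hg, trinomial_eq_mul_of_pow_eq a b c (hγ_prim.pow_three_mul_add_two_pow (i + k)),
    ← inv_mul_cancel_left₀ ht ((γ : F) ^ (3 * i)), ← hω.cube_root_coeff_eq_inv ht, ha, hb, hc]
  ring

theorem stmt7 (q m : ℕ) (F : Type*) [Field F] [Fintype F]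
    (hq : Fintype.card F = q) (hodd : Odd q) (hq3 : q % 3 = 1)
    (hm : m = (q - 1) / 3)
    (γ : Fˣ) (hγ : ∀ x : Fˣ, x ∈ Subgroup.zpowers γ)
    (k : ℕ) (hk : k ≤ m - 1)
    (a b c : F)
    (ha : a = ((γ : F)^(2*m+3*k+2) + (γ : F)^(m+6*k+4) + 1) / (3 * (γ : F)^(m+3*k+2)))
    (hb : b = ((γ : F)^(2*m) + (γ : F)^(m+6*k+4) + (γ : F)^(3*k+2)) / (3 * (γ : F)^(m+3*k+2)))
    (hc : c = ((γ : F)^(6*k+4) + (γ : F)^(3*k+2) + 1) / (3 * (γ : F)^(3*k+2)))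
    (g : F → F)
    (hg : ∀ x : F, g x = a * x^(2*m+1) + b * x^(m+1) + c * x) :
    ∀ i : ℕ, i ≤ m - 1 → g ((γ : F)^(3*(i+k)+2)) = (γ : F)^(3*i) :=
  stmt7_general q m F hq hq3 hm γ hγ k a b c ha hb hc g hg
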